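/- arXiv:2210.05893 — 2 statements merged into one kernel-verified Lean document; each statement's English description precedes it below -/
import Mathlib

section
/- Fix k ≥ 1, ρ ∈ (0,1)^k with Σ_r ρ_r = 1, a symmetric matrix P ∈ (0,1)^{k×k}, and indices i ≠ j in [k] such that P_{ri} ≠ P_{rj} for at least one r ∈ [k]. Let t_0 = 1/Δ_+(θ_i, θ_j). Then: (a) DR_{1/t_0}(i) and DR_{1/t_0}(j) intersect at a single point x*; (b) with H = {x ∈ ℝ^{2k} : ⟨w*, x − x*⟩ ≥ 0}, one has DR_{1/t_0}(i) ⊆ H and DR_{1/t_0}(j) ∩ H = {x*}, i.e., the hyperplane {x : ⟨w*, x − x*⟩ = 0} separates DR_{1/t_0}(i) \ {x*} from DR_{1/t_0}(j) \ {x*}; (c) there exists r > 0 such that the open Euclidean ball of radius r‖w*‖₂ centered at x* + r w* is contained in DR_{1/t_0}(i), and the open Euclidean ball of radius r‖w*‖₂ centered at x* − r w* is contained in DR_{1/t_0}(j); (d) for every t with 0 < t < t_0, the set DR_{1/t}(i) ∩ DR_{1/t}(j) has a non-empty interior (as a subset of ℝ^{2k}). -/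
open scoped RealInnerProductSpace

/-- The dissonance of `x` relative to community `i` (coordinate `(r,false)` is `x_{1,r}`,
coordinate `(r,true)` is `x_{2,r}`; `0 * Real.log (0 / c) = 0` in Lean, matching the
convention that a term vanishes when the corresponding coordinate is `0`). -/
noncomputable def eta {k : ℕ} (ρ : Fin k → ℝ) (P : Matrix (Fin k) (Fin k) ℝ)
    (i : Fin k) (x : EuclideanSpace ℝ (Fin k × Bool)) : ℝ :=
  (∑ r : Fin k,
    (x (r, false) * Real.log (x (r, false) / (Real.exp 1 * ρ r * P r i))
      + x (r, true) * Real.log (x (r, true) / (Real.exp 1 * ρ r * (1 - P r i))))) + 1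

/-- The δ-dissonance range relative to community `i`. -/
noncomputable def DR {k : ℕ} (ρ : Fin k → ℝ) (P : Matrix (Fin k) (Fin k) ℝ)
    (i : Fin k) (δ : ℝ) : Set (EuclideanSpace ℝ (Fin k × Bool)) :=
  {x | (∀ p, 0 ≤ x p) ∧ eta ρ P i x ≤ δ}

/-- `CH_ξ(μ, ν) = ∑_i [ξ μ_i + (1-ξ) ν_i − μ_i^ξ ν_i^{1-ξ}]`. -/
noncomputable def CH {ι : Type*} [Fintype ι] (ξ : ℝ) (μ ν : ι → ℝ) : ℝ :=
  ∑ i, (ξ * μ i + (1 - ξ) * ν i - μ i ^ ξ * ν i ^ (1 - ξ))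

/-- The Chernoff–Hellinger divergence `Δ_+(μ,ν) = max_{ξ ∈ [0,1]} CH_ξ(μ,ν)`. -/
noncomputable def DeltaPlus {ι : Type*} [Fintype ι] (μ ν : ι → ℝ) : ℝ :=
  sSup ((fun ξ => CH ξ μ ν) '' Set.Icc (0 : ℝ) 1)

/-- `θ_i = (ρ_r P_{ri}, ρ_r (1 − P_{ri}))_{r ∈ [k]}`. -/
noncomputable def theta {k : ℕ} (ρ : Fin k → ℝ) (P : Matrix (Fin k) (Fin k) ℝ)
    (i : Fin k) : Fin k × Bool → ℝ :=
  fun p => if p.2 then ρ p.1 * (1 - P p.1 i) else ρ p.1 * P p.1 i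

/-- `w* = (ln(P_{ri}/P_{rj}), ln((1−P_{ri})/(1−P_{rj})))_{r ∈ [k]}`. -/
noncomputable def wstar {k : ℕ} (P : Matrix (Fin k) (Fin k) ℝ) (i j : Fin k) :
    EuclideanSpace ℝ (Fin k × Bool) :=
  (WithLp.equiv 2 (Fin k × Bool → ℝ)).symm fun p =>
    if p.2 then Real.log ((1 - P p.1 i) / (1 - P p.1 j))
    else Real.log (P p.1 i / P p.1 j)

/-!
Let `ξ ∈ (0,1)` maximize `CH_ξ(θ_i, θ_j)`, let `x* = θ_i^ξ θ_j^(1-ξ)` and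
`w = log (θ_i / θ_j) = w*`. The dissonance `η_c(x)` is the generalized Kullback–Leibler
divergence `D(x ‖ θ_c)`, and the three-point identity for `D` gives
  `η_i(x) = D(x ‖ x*) + (ξ - 1) ⟪w, x - x*⟫ + Δ_+`,
  `η_j(x) = D(x ‖ x*) + ξ ⟪w, x - x*⟫ + Δ_+`,
where the linear terms are centred at `x*` because the first-order condition at `ξ` reads
`⟪w, x*⟫ = 0`. Since `D(· ‖ x*) ≥ 0` vanishes only at `x*` and is at most quadratic near
`x*`, all four claims are statements about the sublevel sets of `D(· ‖ x*)` tilted by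
`±⟪w, · - x*⟫`.
-/

open Real InformationTheory Metric Filter Topology

lemma klFun_le_sq {x : ℝ} (hx : 0 ≤ x) : klFun x ≤ (x - 1) ^ 2 := by
  have : x * log x ≤ x * (x - 1) := by
    rcases hx.eq_or_lt with rfl | hx
    · simp
    · exact mul_le_mul_of_nonneg_left (log_le_sub_one_of_pos hx) hx.le
  rw [klFun_apply]
  nlinarith

lemma mul_klFun_div {y : ℝ} (hy : y ≠ 0) (x : ℝ) :
    y * klFun (x / y) = x * log (x / y) - x + y := by
  rw [klFun_apply]
  field_simp
  ring

section KLDivVec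

variable {ι : Type*} [Fintype ι] {x y : ι → ℝ}

/-- Since `y * klFun (x / y) = x log (x / y) - x + y`, this is the generalized Kullback–Leibler
divergence of unnormalized vectors. -/
noncomputable def klDivVec (x y : ι → ℝ) : ℝ := ∑ p, y p * klFun (x p / y p)

lemma klDivVec_nonneg (hx : ∀ p, 0 ≤ x p) (hy : ∀ p, 0 < y p) : 0 ≤ klDivVec x y :=
  Finset.sum_nonneg fun p _ => mul_nonneg (hy p).le (klFun_nonneg (div_nonneg (hx p) (hy p).le))

lemma klDivVec_eq_zero_iff (hx : ∀ p, 0 ≤ x p) (hy : ∀ p, 0 < y p) :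
    klDivVec x y = 0 ↔ x = y := by
  refine ⟨fun h => funext fun p => ?_,
    fun h => by simp [h, klDivVec, div_self (hy _).ne', klFun_one]⟩
  have hterm := (Finset.sum_eq_zero_iff_of_nonneg fun q _ => mul_nonneg (hy q).le
    (klFun_nonneg (div_nonneg (hx q) (hy q).le))).1 h p (Finset.mem_univ p)
  rw [mul_eq_zero, or_iff_right (hy p).ne', klFun_eq_zero_iff (div_nonneg (hx p) (hy p).le),
    div_eq_one_iff_eq (hy p).ne'] at hterm
  exact hterm

lemma klDivVec_le_sum_sq {m : ℝ} (hx : ∀ p, 0 ≤ x p) (hm : 0 < m) (hmy : ∀ p, m ≤ y p) :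
    klDivVec x y ≤ (∑ p, (x p - y p) ^ 2) / m := by
  rw [Finset.sum_div]
  refine Finset.sum_le_sum fun p _ => ?_
  have hy : 0 < y p := hm.trans_le (hmy p)
  calc y p * klFun (x p / y p) ≤ y p * (x p / y p - 1) ^ 2 :=
        mul_le_mul_of_nonneg_left (klFun_le_sq (div_nonneg (hx p) hy.le)) hy.le
    _ = (x p - y p) ^ 2 / y p := by field_simp
    _ ≤ (x p - y p) ^ 2 / m := div_le_div_of_nonneg_left (sq_nonneg _) hm (hmy p)

lemma klDivVec_eq_add {a : ι → ℝ} (ha : ∀ p, 0 < a p) (hy : ∀ p, 0 < y p) (x : ι → ℝ) :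
    klDivVec x a = klDivVec x y + ∑ p, x p * log (y p / a p) + (∑ p, a p - ∑ p, y p) := by
  have hsplit (p) : x p * log (x p / a p) = x p * log (x p / y p) + x p * log (y p / a p) := by
    rcases eq_or_ne (x p) 0 with h | h
    · simp [h]
    · rw [log_div h (ha p).ne', log_div h (hy p).ne', log_div (hy p).ne' (ha p).ne']
      ring
  simp only [klDivVec, mul_klFun_div (ha _).ne', mul_klFun_div (hy _).ne', hsplit,
    ← Finset.sum_sub_distrib, ← Finset.sum_add_distrib]
  exact Finset.sum_congr rfl fun p _ => by ring

@[fun_prop]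
lemma continuous_klDivVec (y : ι → ℝ) : Continuous fun x => klDivVec x y :=
  continuous_finsetSum _ fun p _ =>
    continuous_const.mul (continuous_klFun.comp ((continuous_apply p).div_const _))

end KLDivVec

section TiltedSublevel

variable {ι : Type*} [Fintype ι] {y w : EuclideanSpace ℝ ι} {s ε : ℝ}

def tiltedKLSublevel (y w : EuclideanSpace ℝ ι) (s ε : ℝ) : Set (EuclideanSpace ℝ ι) :=
  {x | (∀ p, 0 ≤ x p) ∧ klDivVec x y + s * ⟪w, x - y⟫ ≤ ε}

lemma tiltedKLSublevel_neg : tiltedKLSublevel y (-w) (-s) ε = tiltedKLSublevel y w s ε := by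
  simp [tiltedKLSublevel]

lemma self_mem_tiltedKLSublevel (hy : ∀ p, 0 < y p) (hε : 0 ≤ ε) :
    y ∈ tiltedKLSublevel y w s ε :=
  ⟨fun p => (hy p).le, by simpa [(klDivVec_eq_zero_iff (fun p => (hy p).le) hy).2 rfl] using hε⟩

lemma eq_of_klDivVec_nonpos (hy : ∀ p, 0 < y p) {x : EuclideanSpace ℝ ι}
    (hx : ∀ p, 0 ≤ x p) (hD : klDivVec x y ≤ 0) : x = y :=
  WithLp.ofLp_injective 2 <|
    (klDivVec_eq_zero_iff hx hy).1 (hD.antisymm (klDivVec_nonneg hx hy))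

lemma tiltedKLSublevel_inter_tiltedKLSublevel (hy : ∀ p, 0 < y p) {ξ : ℝ}
    (hξ : ξ ∈ Set.Icc 0 1) :
    tiltedKLSublevel y w (ξ - 1) 0 ∩ tiltedKLSublevel y w ξ 0 = {y} := by
  refine Set.eq_singleton_iff_unique_mem.2
    ⟨⟨self_mem_tiltedKLSublevel hy le_rfl, self_mem_tiltedKLSublevel hy le_rfl⟩, ?_⟩
  rintro x ⟨⟨hx, hi⟩, -, hj⟩
  refine eq_of_klDivVec_nonpos hy hx ?_
  -- the convex combination with weights `ξ` and `1 - ξ` cancels the linear terms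
  nlinarith [mul_le_mul_of_nonneg_left hi hξ.1,
    mul_le_mul_of_nonneg_left hj (sub_nonneg.2 hξ.2)]

lemma tiltedKLSublevel_subset_inner_nonneg (hy : ∀ p, 0 < y p) (hs : s < 0) :
    tiltedKLSublevel y w s 0 ⊆ {x | 0 ≤ ⟪w, x - y⟫} := by
  rintro x ⟨hx, hle⟩
  exact nonneg_of_mul_nonpos_right (by linarith [klDivVec_nonneg hx hy]) hs

lemma tiltedKLSublevel_inter_inner_nonneg (hy : ∀ p, 0 < y p) (hs : 0 < s) :
    tiltedKLSublevel y w s 0 ∩ {x | 0 ≤ ⟪w, x - y⟫} = {y} := by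
  refine Set.eq_singleton_iff_unique_mem.2
    ⟨⟨self_mem_tiltedKLSublevel hy le_rfl, by simp⟩, ?_⟩
  rintro x ⟨⟨hx, hle⟩, hw : 0 ≤ ⟪w, x - y⟫⟩
  exact eq_of_klDivVec_nonpos hy hx (by nlinarith)

lemma exists_pos_le_apply (hy : ∀ p, 0 < y p) : ∃ m > 0, ∀ p, m ≤ y p := by
  have : ∀ᶠ m in 𝓝[>] (0 : ℝ), ∀ p, m ≤ y p := Filter.eventually_all.2 fun p =>
    eventually_nhdsWithin_of_eventually_nhds (eventually_le_nhds (hy p))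
  exact (this.and self_mem_nhdsWithin).exists.imp fun m h => ⟨h.2, h.1⟩

lemma ball_subset_nonneg {m : ℝ} (hmy : ∀ p, m ≤ y p) :
    ball y m ⊆ {x | ∀ p, 0 ≤ x p} := fun x hx p => by
  have := (PiLp.dist_apply_le x y p).trans_lt hx
  rw [Real.dist_eq] at this
  linarith [neg_abs_le (x p - y p), hmy p]

lemma norm_sub_sq_lt_of_mem_ball_add_smul {E : Type*} [NormedAddCommGroup E]
    [InnerProductSpace ℝ E] {x y w : E} {r : ℝ} (hx : x ∈ ball (y + r • w) (r * ‖w‖)) :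
    ‖x - y‖ ^ 2 < 2 * r * ⟪w, x - y⟫ := by
  have hr : 0 ≤ r := by
    by_contra! hr
    exact (dist_nonneg.trans_lt hx).not_ge
      (mul_nonpos_of_nonpos_of_nonneg hr.le (norm_nonneg w))
  rw [mem_ball, dist_eq_norm, sub_add_eq_sub_sub] at hx
  have hsq := pow_lt_pow_left₀ hx (norm_nonneg _) two_ne_zero
  rw [norm_sub_sq_real, inner_smul_right, norm_smul, Real.norm_of_nonneg hr,
    real_inner_comm] at hsq
  linarith

/- On the ball, `‖x - y‖² < 2r ⟪w, x - y⟫` while `D(x ‖ y) ≤ ‖x - y‖² / m` with `0 < m ≤ min y`,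
so the tilt `s ⟪w, x - y⟫` dominates once `2r ≤ -s m`. -/
lemma eventually_ball_subset_tiltedKLSublevel (hy : ∀ p, 0 < y p) (hs : s < 0) :
    ∀ᶠ r in 𝓝[>] (0 : ℝ), ball (y + r • w) (r * ‖w‖) ⊆ tiltedKLSublevel y w s 0 := by
  obtain ⟨m, hm, hmy⟩ := exists_pos_le_apply hy
  have hsmall : ∀ᶠ r in 𝓝 (0 : ℝ), 2 * r * ‖w‖ < m ∧ 2 * r < -s * m :=
    (ContinuousAt.eventually_lt (f := fun r => 2 * r * ‖w‖) (by fun_prop) continuousAt_const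
      (by simpa using hm)).and
    (ContinuousAt.eventually_lt (f := fun r => 2 * r) (by fun_prop) continuousAt_const
      (by simpa using mul_pos (neg_pos.2 hs) hm))
  filter_upwards [self_mem_nhdsWithin, nhdsWithin_le_nhds hsmall] with r hr ⟨hrw, hrs⟩ x hx
  have hnear : x ∈ ball y m := ball_subset_ball' (by
    rw [dist_self_add_left, norm_smul, Real.norm_of_nonneg (le_of_lt hr)]; linarith) hx
  have hx0 := ball_subset_nonneg hmy hnear
  have hsq := norm_sub_sq_lt_of_mem_ball_add_smul hx
  have hD : klDivVec x y ≤ ‖x - y‖ ^ 2 / m := by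
    simpa [EuclideanSpace.real_norm_sq_eq] using klDivVec_le_sum_sq hx0 hm hmy
  have hinner : 0 < ⟪w, x - y⟫ :=
    pos_of_mul_pos_right ((sq_nonneg _).trans_lt hsq) (by linarith [hr.out])
  refine ⟨hx0, nonpos_of_mul_nonpos_left ?_ hm⟩
  rw [le_div_iff₀ hm] at hD
  nlinarith [mul_lt_mul_of_pos_right hrs hinner]

lemma exists_balls_subset_tiltedKLSublevel (hy : ∀ p, 0 < y p) {ξ : ℝ}
    (hξ : ξ ∈ Set.Ioo 0 1) : ∃ r > (0 : ℝ),
      ball (y + r • w) (r * ‖w‖) ⊆ tiltedKLSublevel y w (ξ - 1) 0 ∧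
      ball (y - r • w) (r * ‖w‖) ⊆ tiltedKLSublevel y w ξ 0 := by
  have hballs := (eventually_ball_subset_tiltedKLSublevel (w := w) hy (sub_neg.2 hξ.2)).and
    (eventually_ball_subset_tiltedKLSublevel (w := -w) hy (neg_neg_of_pos hξ.1))
  obtain ⟨r, ⟨hri, hrj⟩, hr⟩ := (hballs.and self_mem_nhdsWithin).exists
  rw [tiltedKLSublevel_neg, smul_neg, ← sub_eq_add_neg, norm_neg] at hrj
  exact ⟨r, hr, hri, hrj⟩

lemma self_mem_interior_tiltedKLSublevel (hy : ∀ p, 0 < y p) (hε : 0 < ε) :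
    y ∈ interior (tiltedKLSublevel y w s ε) := by
  obtain ⟨m, hm, hmy⟩ := exists_pos_le_apply hy
  have hlt : ∀ᶠ x : EuclideanSpace ℝ ι in 𝓝 y, klDivVec x y + s * ⟪w, x - y⟫ < ε := by
    refine ContinuousAt.eventually_lt (by fun_prop) continuousAt_const ?_
    simpa [(klDivVec_eq_zero_iff (fun p => (hy p).le) hy).2 rfl] using hε
  rw [mem_interior_iff_mem_nhds]
  filter_upwards [ball_mem_nhds y hm, hlt] with x hx hlt
  exact ⟨ball_subset_nonneg hmy hx, hlt.le⟩

lemma setOf_klDivVec_le_eq_tiltedKLSublevel {a : ι → ℝ} (ha : ∀ p, 0 < a p)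
    (hy : ∀ p, 0 < y p) (hlog : ∀ p, log (y p / a p) = s * w p) (horth : ⟪w, y⟫ = 0) (δ : ℝ) :
    {x : EuclideanSpace ℝ ι | (∀ p, 0 ≤ x p) ∧ klDivVec x a ≤ δ} =
      tiltedKLSublevel y w s (δ - (∑ p, a p - ∑ p, y p)) := by
  ext x
  have hlin : ∑ p, x p * log (y p / a p) = s * ⟪w, x - y⟫ := by
    simp only [hlog, inner_sub_right, horth, sub_zero, PiLp.inner_apply, Finset.mul_sum,
      RCLike.inner_apply, conj_trivial]
    exact Finset.sum_congr rfl fun p _ => by ring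
  simp only [tiltedKLSublevel, klDivVec_eq_add ha hy]
  constructor <;> rintro ⟨hx, h⟩ <;> exact ⟨hx, by linarith [hlin]⟩

end TiltedSublevel

section ChernoffHellinger

variable {ι : Type*} {μ ν : ι → ℝ}

noncomputable def geomMix (ξ : ℝ) (μ ν : ι → ℝ) (p : ι) : ℝ := μ p ^ ξ * ν p ^ (1 - ξ)

lemma geomMix_pos (hμ : ∀ p, 0 < μ p) (hν : ∀ p, 0 < ν p) (ξ : ℝ) (p : ι) :
    0 < geomMix ξ μ ν p :=
  mul_pos (rpow_pos_of_pos (hμ p) _) (rpow_pos_of_pos (hν p) _)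

lemma log_geomMix_div_left (hμ : ∀ p, 0 < μ p) (hν : ∀ p, 0 < ν p) (ξ : ℝ) (p : ι) :
    log (geomMix ξ μ ν p / μ p) = (ξ - 1) * log (μ p / ν p) := by
  rw [log_div (geomMix_pos hμ hν ξ p).ne' (hμ p).ne', geomMix,
    log_mul (rpow_pos_of_pos (hμ p) _).ne' (rpow_pos_of_pos (hν p) _).ne',
    log_rpow (hμ p), log_rpow (hν p), log_div (hμ p).ne' (hν p).ne']
  ring

lemma log_geomMix_div_right (hμ : ∀ p, 0 < μ p) (hν : ∀ p, 0 < ν p) (ξ : ℝ) (p : ι) :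
    log (geomMix ξ μ ν p / ν p) = ξ * log (μ p / ν p) := by
  rw [log_div (geomMix_pos hμ hν ξ p).ne' (hν p).ne', geomMix,
    log_mul (rpow_pos_of_pos (hμ p) _).ne' (rpow_pos_of_pos (hν p) _).ne',
    log_rpow (hμ p), log_rpow (hν p), log_div (hμ p).ne' (hν p).ne']
  ring

variable [Fintype ι]

lemma CH_zero (μ ν : ι → ℝ) : CH 0 μ ν = 0 := by simp [CH]

lemma CH_one (μ ν : ι → ℝ) : CH 1 μ ν = 0 := by simp [CH]

lemma CH_pos (hμ : ∀ p, 0 < μ p) (hν : ∀ p, 0 < ν p) (hne : ∃ p, μ p ≠ ν p) {ξ : ℝ}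
    (hξ : ξ ∈ Set.Ioo 0 1) : 0 < CH ξ μ ν := by
  have amgm (p) : μ p ^ ξ * ν p ^ (1 - ξ) ≤ ξ * μ p + (1 - ξ) * ν p :=
    geom_mean_le_arith_mean2_weighted hξ.1.le (sub_nonneg.2 hξ.2.le) (hμ p).le (hν p).le
      (by ring)
  obtain ⟨p, hp⟩ := hne
  have amgm_strict : μ p ^ ξ * ν p ^ (1 - ξ) < ξ * μ p + (1 - ξ) * ν p :=
    (geom_mean_lt_arith_mean2_weighted_iff_of_pos hξ.1 (sub_pos.2 hξ.2) (hμ p).le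
      (hν p).le (by ring)).2 hp
  exact Finset.sum_pos' (fun q _ => sub_nonneg.2 (amgm q))
    ⟨p, Finset.mem_univ p, sub_pos.2 amgm_strict⟩

lemma hasDerivAt_CH (hμ : ∀ p, 0 < μ p) (hν : ∀ p, 0 < ν p) (ξ : ℝ) :
    HasDerivAt (fun ξ => CH ξ μ ν)
      (∑ p, (μ p - ν p - geomMix ξ μ ν p * log (μ p / ν p))) ξ := by
  unfold CH
  refine HasDerivAt.fun_sum fun p _ => ?_
  have hμξ := (hasDerivAt_id ξ).const_rpow (hμ p)
  have hνξ := ((hasDerivAt_id ξ).const_sub 1).const_rpow (hν p)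
  convert (((hasDerivAt_id ξ).mul_const (μ p)).add
    (((hasDerivAt_id ξ).const_sub 1).mul_const (ν p))).sub (hμξ.mul hνξ) using 1
  · ext; simp
  · rw [geomMix, log_div (hμ p).ne' (hν p).ne']
    simp only [id]
    ring

lemma exists_isMaxOn_CH (hμ : ∀ p, 0 < μ p) (hν : ∀ p, 0 < ν p) (hne : ∃ p, μ p ≠ ν p) :
    ∃ ξ ∈ Set.Ioo (0 : ℝ) 1, IsMaxOn (fun ξ => CH ξ μ ν) (Set.Icc 0 1) ξ := by
  obtain ⟨ξ, hξ, hmax⟩ := isCompact_Icc.exists_isMaxOn (Set.nonempty_Icc.2 zero_le_one)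
    (fun ξ _ => (hasDerivAt_CH hμ hν ξ).continuousAt.continuousWithinAt)
  have hpos : 0 < CH ξ μ ν :=
    (CH_pos hμ hν hne (by norm_num : (1 / 2 : ℝ) ∈ Set.Ioo 0 1)).trans_le
      (hmax (by norm_num : (1 / 2 : ℝ) ∈ Set.Icc 0 1))
  refine ⟨ξ, ⟨hξ.1.lt_of_ne ?_, hξ.2.lt_of_ne ?_⟩, hmax⟩ <;> rintro rfl
  · exact hpos.ne' (CH_zero μ ν)
  · exact hpos.ne' (CH_one μ ν)

lemma deltaPlus_eq_CH {ξ : ℝ} (hξ : ξ ∈ Set.Icc (0 : ℝ) 1)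
    (hmax : IsMaxOn (fun ξ => CH ξ μ ν) (Set.Icc 0 1) ξ) : DeltaPlus μ ν = CH ξ μ ν :=
  IsGreatest.csSup_eq ⟨Set.mem_image_of_mem _ hξ, Set.forall_mem_image.2 fun _ h => hmax h⟩

lemma exists_deltaPlus_eq_one_sub (hμ : ∀ p, 0 < μ p) (hν : ∀ p, 0 < ν p)
    (hμ1 : ∑ p, μ p = 1) (hν1 : ∑ p, ν p = 1) (hne : ∃ p, μ p ≠ ν p) :
    ∃ ξ ∈ Set.Ioo (0 : ℝ) 1, ∑ p, geomMix ξ μ ν p * log (μ p / ν p) = 0 ∧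
      DeltaPlus μ ν = 1 - ∑ p, geomMix ξ μ ν p := by
  obtain ⟨ξ, hξ, hmax⟩ := exists_isMaxOn_CH hμ hν hne
  have hcrit := (hmax.isLocalMax (Icc_mem_nhds hξ.1 hξ.2)).hasDerivAt_eq_zero
    (hasDerivAt_CH hμ hν ξ)
  refine ⟨ξ, hξ, ?_, ?_⟩
  · rw [Finset.sum_sub_distrib, Finset.sum_sub_distrib, hμ1, hν1, sub_self, zero_sub,
      neg_eq_zero] at hcrit
    exact hcrit
  · rw [deltaPlus_eq_CH (Set.Ioo_subset_Icc_self hξ) hmax, CH, Finset.sum_sub_distrib,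
      Finset.sum_add_distrib, ← Finset.mul_sum, ← Finset.mul_sum, hμ1, hν1]
    simp only [geomMix]
    ring

end ChernoffHellinger

section Community

variable {k : ℕ} {ρ : Fin k → ℝ} {P : Matrix (Fin k) (Fin k) ℝ}

lemma theta_pos (hρ : ∀ r, 0 < ρ r) {c : Fin k} (hP : ∀ r, P r c ∈ Set.Ioo 0 1)
    (p : Fin k × Bool) : 0 < theta ρ P c p := by
  rcases p with ⟨r, _ | _⟩
  · exact mul_pos (hρ r) (hP r).1
  · exact mul_pos (hρ r) (sub_pos.2 (hP r).2)

lemma sum_theta (hρsum : ∑ r, ρ r = 1) (c : Fin k) : ∑ p, theta ρ P c p = 1 := by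
  simp [Fintype.sum_prod_type, theta, ← mul_add, hρsum]

lemma wstar_apply (hρ : ∀ r, ρ r ≠ 0) (i j : Fin k) (p : Fin k × Bool) :
    wstar P i j p = log (theta ρ P i p / theta ρ P j p) := by
  rcases p with ⟨r, _ | _⟩ <;> simp [wstar, theta, mul_div_mul_left _ _ (hρ r)]

lemma exists_theta_ne (hρ : ∀ r, ρ r ≠ 0) {i j : Fin k} (hPij : ∃ r, P r i ≠ P r j) :
    ∃ p, theta ρ P i p ≠ theta ρ P j p := by
  obtain ⟨r, hr⟩ := hPij
  exact ⟨(r, false), fun h => hr (mul_left_cancel₀ (hρ r) h)⟩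

lemma mul_log_div_exp_mul {a : ℝ} (ha : a ≠ 0) (x : ℝ) :
    x * log (x / (exp 1 * a)) = a * klFun (x / a) - a := by
  rw [mul_klFun_div ha]
  rcases eq_or_ne x 0 with rfl | hx
  · simp
  · rw [log_div hx (mul_ne_zero (exp_ne_zero 1) ha), log_mul (exp_ne_zero 1) ha, log_exp,
      log_div hx ha]
    ring

lemma eta_eq_klDivVec {c : Fin k} (hθ : ∀ p, 0 < theta ρ P c p) (hρsum : ∑ r, ρ r = 1)
    (x : EuclideanSpace ℝ (Fin k × Bool)) : eta ρ P c x = klDivVec x (theta ρ P c) := by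
  have hterm (p : Fin k × Bool) : x p * log (x p / (exp 1 * theta ρ P c p)) =
      theta ρ P c p * klFun (x p / theta ρ P c p) - theta ρ P c p :=
    mul_log_div_exp_mul (hθ p).ne' _
  calc eta ρ P c x = ∑ p, x p * log (x p / (exp 1 * theta ρ P c p)) + 1 := by
        simp only [eta, Fintype.sum_prod_type, Fintype.sum_bool, theta, mul_assoc (exp 1)]
        simp only [if_true, Bool.false_eq_true, if_false, add_comm]
    _ = klDivVec x (theta ρ P c) := by
        simp only [hterm, Finset.sum_sub_distrib, sum_theta hρsum, klDivVec, sub_add_cancel]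

lemma DR_eq_setOf_klDivVec_le {c : Fin k} (hθ : ∀ p, 0 < theta ρ P c p)
    (hρsum : ∑ r, ρ r = 1) (δ : ℝ) :
    DR ρ P c δ =
      {x : EuclideanSpace ℝ (Fin k × Bool) | (∀ p, 0 ≤ x p) ∧ klDivVec x (theta ρ P c) ≤ δ} := by
  simp only [DR, eta_eq_klDivVec hθ hρsum]

end Community

theorem stmt5_general (k : ℕ) (ρ : Fin k → ℝ)
    (hρ : ∀ r, ρ r ∈ Set.Ioo (0 : ℝ) 1) (hρsum : ∑ r, ρ r = 1)
    (P : Matrix (Fin k) (Fin k) ℝ)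
    (hP : ∀ r s, P r s ∈ Set.Ioo (0 : ℝ) 1)
    (i j : Fin k) (hPij : ∃ r, P r i ≠ P r j)
    (t0 : ℝ) (ht0 : t0 = 1 / DeltaPlus (theta ρ P i) (theta ρ P j)) :
    ∃ xs : EuclideanSpace ℝ (Fin k × Bool),
      -- (a) the two dissonance ranges intersect at the single point `xs`
      DR ρ P i (1 / t0) ∩ DR ρ P j (1 / t0) = {xs} ∧
      -- (b) with `H = {x : ⟨w*, x − xs⟩ ≥ 0}`, `DR_{1/t0}(i) ⊆ H` and `DR_{1/t0}(j) ∩ H = {xs}`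
      DR ρ P i (1 / t0) ⊆ {x | 0 ≤ ⟪wstar P i j, x - xs⟫} ∧
      DR ρ P j (1 / t0) ∩ {x | 0 ≤ ⟪wstar P i j, x - xs⟫} = {xs} ∧
      -- (c) balls tangent at `xs` inside each dissonance range
      (∃ r > (0 : ℝ),
        Metric.ball (xs + r • wstar P i j) (r * ‖wstar P i j‖) ⊆ DR ρ P i (1 / t0) ∧
        Metric.ball (xs - r • wstar P i j) (r * ‖wstar P i j‖) ⊆ DR ρ P j (1 / t0)) ∧
      -- (d) below `t0` the intersection has non-empty interior
      (∀ t : ℝ, 0 < t → t < t0 →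
        (interior (DR ρ P i (1 / t) ∩ DR ρ P j (1 / t))).Nonempty) := by
  have hρ0 (r : Fin k) : ρ r ≠ 0 := (hρ r).1.ne'
  have hθ (c : Fin k) := theta_pos (fun r => (hρ r).1) (fun r => hP r c)
  obtain ⟨ξ, hξ, horth, hΔ⟩ := exists_deltaPlus_eq_one_sub (hθ i) (hθ j) (sum_theta hρsum i)
    (sum_theta hρsum j) (exists_theta_ne hρ0 hPij)
  set w := wstar P i j
  set xs : EuclideanSpace ℝ (Fin k × Bool) :=
    WithLp.toLp 2 (geomMix ξ (theta ρ P i) (theta ρ P j))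
  have hxs : ∀ p, 0 < xs p := geomMix_pos (hθ i) (hθ j) ξ
  have hw : ⟪w, xs⟫ = 0 := by
    simpa [w, xs, PiLp.inner_apply, wstar_apply hρ0, mul_comm] using horth
  have hDR {c : Fin k} {s : ℝ} (hlog : ∀ p, log (xs p / theta ρ P c p) = s * w p) (δ : ℝ) :
      DR ρ P c δ = tiltedKLSublevel xs w s (δ - DeltaPlus (theta ρ P i) (theta ρ P j)) := by
    rw [DR_eq_setOf_klDivVec_le (hθ c) hρsum, setOf_klDivVec_le_eq_tiltedKLSublevel (hθ c) hxs
      hlog hw, sum_theta hρsum, hΔ]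
  have hDRi := hDR (s := ξ - 1) fun p => by
    rw [log_geomMix_div_left (hθ i) (hθ j), wstar_apply hρ0]
  have hDRj := hDR (s := ξ) fun p => by
    rw [log_geomMix_div_right (hθ i) (hθ j), wstar_apply hρ0]
  have ht0' : 1 / t0 = DeltaPlus (theta ρ P i) (theta ρ P j) := by rw [ht0, one_div_one_div]
  simp only [hDRi, hDRj, ht0', sub_self]
  refine ⟨xs, tiltedKLSublevel_inter_tiltedKLSublevel hxs (Set.Ioo_subset_Icc_self hξ),
    tiltedKLSublevel_subset_inner_nonneg hxs (sub_neg.2 hξ.2),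
    tiltedKLSublevel_inter_inner_nonneg hxs hξ.1, ?_, fun t ht htt0 => ?_⟩
  · exact exists_balls_subset_tiltedKLSublevel hxs hξ
  · have hε : 0 < 1 / t - DeltaPlus (theta ρ P i) (theta ρ P j) :=
      sub_pos.2 (ht0' ▸ one_div_lt_one_div_of_lt ht htt0)
    exact ⟨xs, by rw [interior_inter]; exact ⟨self_mem_interior_tiltedKLSublevel hxs hε,
      self_mem_interior_tiltedKLSublevel hxs hε⟩⟩

theorem stmt5 (k : ℕ) (hk : 1 ≤ k) (ρ : Fin k → ℝ)
    (hρ : ∀ r, ρ r ∈ Set.Ioo (0 : ℝ) 1) (hρsum : ∑ r, ρ r = 1)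
    (P : Matrix (Fin k) (Fin k) ℝ) (hPsymm : P.IsSymm)
    (hP : ∀ r s, P r s ∈ Set.Ioo (0 : ℝ) 1)
    (i j : Fin k) (hij : i ≠ j) (hPij : ∃ r, P r i ≠ P r j)
    (t0 : ℝ) (ht0 : t0 = 1 / DeltaPlus (theta ρ P i) (theta ρ P j)) :
    ∃ xs : EuclideanSpace ℝ (Fin k × Bool),
      -- (a) the two dissonance ranges intersect at the single point `xs`
      DR ρ P i (1 / t0) ∩ DR ρ P j (1 / t0) = {xs} ∧
      -- (b) with `H = {x : ⟨w*, x − xs⟩ ≥ 0}`, `DR_{1/t0}(i) ⊆ H` and `DR_{1/t0}(j) ∩ H = {xs}`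
      DR ρ P i (1 / t0) ⊆ {x | 0 ≤ ⟪wstar P i j, x - xs⟫} ∧
      DR ρ P j (1 / t0) ∩ {x | 0 ≤ ⟪wstar P i j, x - xs⟫} = {xs} ∧
      -- (c) balls tangent at `xs` inside each dissonance range
      (∃ r > (0 : ℝ),
        Metric.ball (xs + r • wstar P i j) (r * ‖wstar P i j‖) ⊆ DR ρ P i (1 / t0) ∧
        Metric.ball (xs - r • wstar P i j) (r * ‖wstar P i j‖) ⊆ DR ρ P j (1 / t0)) ∧
      -- (d) below `t0` the intersection has non-empty interior
      (∀ t : ℝ, 0 < t → t < t0 →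
        (interior (DR ρ P i (1 / t) ∩ DR ρ P j (1 / t))).Nonempty) :=
  stmt5_general k ρ hρ hρsum P hP i j hPij t0 ht0
end

section
/- Let p, q ∈ (0,1) with p ≠ q, let ρ ∈ (0,1), set p₁ = p₂ = p, and let y = y(p,q) = ln((1−q)/(1−p)) / ln(p/q). Then the 2×2 real matrix A'(y) = [[p−y(1−p), q−y(1−q)], [q−y(1−q), p−y(1−p)]] · diag(ρ, 1−ρ) has two distinct nonzero real eigenvalues if and only if p + q ≠ 1. -/
/-- `y(p,q) = ln((1−q)/(1−p)) / ln(p/q)`. -/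
noncomputable def yval (p q : ℝ) : ℝ :=
  Real.log ((1 - q) / (1 - p)) / Real.log (p / q)

/-- The matrix `A'(y)` from the censored SBM with two communities:
the signed-encoding matrix multiplied by `diag(ρ, 1−ρ)`. -/
noncomputable def Aprime (p₁ p₂ q ρ y : ℝ) : Matrix (Fin 2) (Fin 2) ℝ :=
  !![p₁ - y * (1 - p₁), q - y * (1 - q); q - y * (1 - q), p₂ - y * (1 - p₂)] *
    Matrix.diagonal ![ρ, 1 - ρ]

/-!
With `L = log p - log q`, the entries `a = p - y (1 - p)` and `b = q - y (1 - q)` of `A'(y)`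
satisfy `a L = KL(p ‖ q) > 0` and `b L = -KL(q ‖ p) < 0`, so `b ≠ 0` and `a ≠ b`. The matrix
has trace `a` and determinant `ρ (1 - ρ) (a² - b²)`, hence positive discriminant
`((1 - 2ρ) a)² + 4ρ(1 - ρ) b²`, and it is singular iff `a + b = 0`. Finally
`(a + b) L = (p + q) L - (2 - p - q) log ((1 - q) / (1 - p))` vanishes iff `p + q = 1`,
because `m ↦ m log ((m + δ) / (m - δ))` is strictly decreasing on `(δ, ∞)`.
-/

open Real

lemma log_lt_sub_inv_div_two {x : ℝ} (hx : 1 < x) : log x < (x - x⁻¹) / 2 := by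
  have h := self_lt_sinh_iff.2 (log_pos hx)
  rwa [sinh_eq, exp_neg, exp_log (by linarith)] at h

lemma strictAntiOn_mul_log_add_sub_log_sub {δ : ℝ} (hδ : 0 < δ) :
    StrictAntiOn (fun m => m * (log (m + δ) - log (m - δ))) (Set.Ioi δ) := by
  have hderiv : ∀ m ∈ Set.Ioi δ, HasDerivAt (fun m => m * (log (m + δ) - log (m - δ)))
      (log (m + δ) - log (m - δ) - 2 * δ * m / ((m + δ) * (m - δ))) m := by
    intro m (hm : δ < m)
    have hadd : m + δ ≠ 0 := by linarith
    have hsub : m - δ ≠ 0 := by linarith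
    refine ((hasDerivAt_id' m).mul ((((hasDerivAt_id' m).add_const δ).log hadd).sub
      (((hasDerivAt_id' m).sub_const δ).log hsub))).congr_deriv ?_
    simp only [Pi.sub_apply]
    field_simp
    ring
  refine strictAntiOn_of_deriv_neg (convex_Ioi δ)
    (fun m hm => (hderiv m hm).continuousAt.continuousWithinAt) fun m hm => ?_
  rw [interior_Ioi] at hm
  rw [(hderiv m hm).deriv]
  replace hm : δ < m := hm
  -- the bound `log x < (x - x⁻¹) / 2` at `x = (m + δ) / (m - δ)` is exactly what is needed
  have hsub : 0 < m - δ := by linarith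
  have hbound := log_lt_sub_inv_div_two ((one_lt_div hsub).2 (by linarith : m - δ < m + δ))
  rw [log_div (by linarith) hsub.ne', inv_div] at hbound
  have hid : ((m + δ) / (m - δ) - (m - δ) / (m + δ)) / 2 = 2 * δ * m / ((m + δ) * (m - δ)) := by
    field_simp
    ring
  linarith

/-- In the coordinates `m = (p + q) / 2`, `δ = (p - q) / 2` both sides are values of the strictly
decreasing function above, at `m` and at `1 - m`. -/
lemma add_mul_log_sub_log_eq_iff_of_lt {p q : ℝ} (hq : 0 < q) (hqp : q < p) (hp : p < 1) :
    (p + q) * (log p - log q) = (2 - p - q) * (log (1 - q) - log (1 - p)) ↔ p + q = 1 := by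
  have key := (strictAntiOn_mul_log_add_sub_log_sub (δ := (p - q) / 2) (by linarith)).injOn.eq_iff
    (show (p - q) / 2 < (p + q) / 2 by linarith) (show (p - q) / 2 < (2 - p - q) / 2 by linarith)
  simp only [show (p + q) / 2 + (p - q) / 2 = p by ring, show (p + q) / 2 - (p - q) / 2 = q by ring,
    show (2 - p - q) / 2 + (p - q) / 2 = 1 - q by ring,
    show (2 - p - q) / 2 - (p - q) / 2 = 1 - p by ring] at key
  calc (p + q) * (log p - log q) = (2 - p - q) * (log (1 - q) - log (1 - p))
      ↔ (p + q) / 2 * (log p - log q) = (2 - p - q) / 2 * (log (1 - q) - log (1 - p)) := by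
        constructor <;> intro h <;> linarith
    _ ↔ (p + q) / 2 = (2 - p - q) / 2 := key
    _ ↔ p + q = 1 := by constructor <;> intro h <;> linarith

lemma add_mul_log_sub_log_eq_iff {p q : ℝ} (hp : p ∈ Set.Ioo (0 : ℝ) 1) (hq : q ∈ Set.Ioo (0 : ℝ) 1)
    (hpq : p ≠ q) :
    (p + q) * (log p - log q) = (2 - p - q) * (log (1 - q) - log (1 - p)) ↔ p + q = 1 := by
  rcases hpq.lt_or_gt with h | h
  · rw [add_comm p q, ← add_mul_log_sub_log_eq_iff_of_lt hp.1 h hq.2]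
    constructor <;> intro h <;> linarith
  · exact add_mul_log_sub_log_eq_iff_of_lt hq.1 h hp.2

lemma mul_log_sub_log_lt_sub {a b : ℝ} (ha : 0 < a) (hb : 0 < b) (hab : a ≠ b) :
    a * (log b - log a) < b - a := by
  have h := log_lt_sub_one_of_pos (div_pos hb ha)
    (by rwa [ne_eq, div_eq_one_iff_eq ha.ne', eq_comm])
  rw [log_div hb.ne' ha.ne'] at h
  calc a * (log b - log a) < a * (b / a - 1) := mul_lt_mul_of_pos_left h ha
    _ = b - a := by field_simp

lemma bernoulli_kl_pos {p q : ℝ} (hp : p ∈ Set.Ioo (0 : ℝ) 1) (hq : q ∈ Set.Ioo (0 : ℝ) 1)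
    (hpq : p ≠ q) :
    0 < p * (log p - log q) + (1 - p) * (log (1 - p) - log (1 - q)) := by
  have h₁ := mul_log_sub_log_lt_sub hp.1 hq.1 hpq
  have h₂ := mul_log_sub_log_lt_sub (sub_pos.2 hp.2) (sub_pos.2 hq.2) (sub_right_injective.ne hpq)
  linarith

section SymmetricMulDiagonal

variable {a b ρ : ℝ}

lemma trace_symm_mul_diagonal :
    (!![a, b; b, a] * Matrix.diagonal ![ρ, 1 - ρ]).trace = a := by
  rw [Matrix.trace_fin_two, Matrix.mul_diagonal, Matrix.mul_diagonal]
  simp only [Matrix.of_apply, Matrix.cons_val', Matrix.cons_val_zero, Matrix.cons_val_fin_one,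
    Matrix.cons_val_one]
  ring

lemma det_symm_mul_diagonal :
    (!![a, b; b, a] * Matrix.diagonal ![ρ, 1 - ρ]).det = ρ * (1 - ρ) * (a ^ 2 - b ^ 2) := by
  rw [Matrix.det_mul, Matrix.det_fin_two_of, Matrix.det_diagonal, Fin.prod_univ_two]
  simp only [Matrix.cons_val_zero, Matrix.cons_val_one]
  ring

lemma det_symm_mul_diagonal_ne_zero_iff (hρ : ρ ∈ Set.Ioo (0 : ℝ) 1) (hab : a ≠ b) :
    (!![a, b; b, a] * Matrix.diagonal ![ρ, 1 - ρ]).det ≠ 0 ↔ a + b ≠ 0 := by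
  have hρ' : ρ * (1 - ρ) ≠ 0 := (mul_pos hρ.1 (sub_pos.2 hρ.2)).ne'
  rw [det_symm_mul_diagonal, sq_sub_sq, mul_ne_zero_iff, and_iff_right hρ', mul_ne_zero_iff,
    and_iff_left (sub_ne_zero.2 hab)]

lemma trace_sq_ne_four_mul_det_symm_mul_diagonal (hρ : ρ ∈ Set.Ioo (0 : ℝ) 1) (hb : b ≠ 0) :
    (!![a, b; b, a] * Matrix.diagonal ![ρ, 1 - ρ]).trace ^ 2 ≠
      4 * (!![a, b; b, a] * Matrix.diagonal ![ρ, 1 - ρ]).det := by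
  rw [trace_symm_mul_diagonal, det_symm_mul_diagonal]
  have : 0 < ρ * (1 - ρ) * b ^ 2 := mul_pos (mul_pos hρ.1 (sub_pos.2 hρ.2)) (by positivity)
  nlinarith [sq_nonneg ((1 - 2 * ρ) * a)]

end SymmetricMulDiagonal

section Yval

variable {p q : ℝ}

lemma log_sub_log_ne_zero (hp : 0 < p) (hq : 0 < q) (hpq : p ≠ q) : log p - log q ≠ 0 :=
  sub_ne_zero.2 fun h => hpq (log_injOn_pos hp hq h)

lemma yval_mul_log_sub_log (hp : p ∈ Set.Ioo (0 : ℝ) 1) (hq : q ∈ Set.Ioo (0 : ℝ) 1)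
    (hpq : p ≠ q) : yval p q * (log p - log q) = log (1 - q) - log (1 - p) := by
  rw [yval, log_div (sub_pos.2 hq.2).ne' (sub_pos.2 hp.2).ne', log_div hp.1.ne' hq.1.ne',
    div_mul_cancel₀ _ (log_sub_log_ne_zero hp.1 hq.1 hpq)]

lemma sub_yval_mul_mul_log_sub_log_pos (hp : p ∈ Set.Ioo (0 : ℝ) 1)
    (hq : q ∈ Set.Ioo (0 : ℝ) 1) (hpq : p ≠ q) :
    0 < (p - yval p q * (1 - p)) * (log p - log q) := by
  have hy := yval_mul_log_sub_log hp hq hpq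
  have hkl := bernoulli_kl_pos hp hq hpq
  linear_combination hkl + (1 - p) * hy

lemma sub_yval_mul_mul_log_sub_log_neg (hp : p ∈ Set.Ioo (0 : ℝ) 1)
    (hq : q ∈ Set.Ioo (0 : ℝ) 1) (hpq : p ≠ q) :
    (q - yval p q * (1 - q)) * (log p - log q) < 0 := by
  have hy := yval_mul_log_sub_log hp hq hpq
  have hkl := bernoulli_kl_pos hq hp hpq.symm
  linear_combination hkl - (1 - q) * hy

lemma sub_yval_mul_add_sub_yval_mul_eq_zero_iff (hp : p ∈ Set.Ioo (0 : ℝ) 1)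
    (hq : q ∈ Set.Ioo (0 : ℝ) 1) (hpq : p ≠ q) :
    (p - yval p q * (1 - p)) + (q - yval p q * (1 - q)) = 0 ↔ p + q = 1 := by
  have hy := yval_mul_log_sub_log hp hq hpq
  rw [← add_mul_log_sub_log_eq_iff hp hq hpq, ← mul_left_inj' (log_sub_log_ne_zero hp.1 hq.1 hpq),
    zero_mul]
  constructor <;> intro h
  · linear_combination h + (2 - p - q) * hy
  · linear_combination h - (2 - p - q) * hy

end Yval

theorem stmt11 (p q ρ : ℝ)
    (hp : p ∈ Set.Ioo (0 : ℝ) 1) (hq : q ∈ Set.Ioo (0 : ℝ) 1) (hpq : p ≠ q)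
    (hρ : ρ ∈ Set.Ioo (0 : ℝ) 1) :
    ((Aprime p p q ρ (yval p q)).det ≠ 0 ∧
      (Aprime p p q ρ (yval p q)).trace ^ 2 ≠ 4 * (Aprime p p q ρ (yval p q)).det) ↔
    p + q ≠ 1 := by
  have ha := sub_yval_mul_mul_log_sub_log_pos hp hq hpq
  have hb := sub_yval_mul_mul_log_sub_log_neg hp hq hpq
  have hb0 : q - yval p q * (1 - q) ≠ 0 := left_ne_zero_of_mul hb.ne
  have hab : p - yval p q * (1 - p) ≠ q - yval p q * (1 - q) :=
    fun h => (hb.trans ha).ne (by rw [h])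
  rw [Aprime, and_iff_left (trace_sq_ne_four_mul_det_symm_mul_diagonal hρ hb0),
    det_symm_mul_diagonal_ne_zero_iff hρ hab, ne_eq, ne_eq,
    sub_yval_mul_add_sub_yval_mul_eq_zero_iff hp hq hpq]
end
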